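/- Let n, q, m be natural numbers with q ≤ n. For each i ∈ Fin m, let C_i ⊆ Fin n with |C_i| ≤ q, let h_i be a PSD matrix indexed by (C_i → Fin 2), and let H_i be the (Fin n → Fin 2)-indexed matrix that is C_i-local with local part h_i. Let H = Σ_{i ∈ Fin m} H_i and suppose H ≼ I. Then there exist matrices H'₁, …, H'_m, indices j(i), k(i) ∈ Fin m and reals c_i, d_i ≥ 0 such that: (i) H'_i = c_i · H_{j(i)} + d_i · H_{k(i)} for every i (hence each H'_i is PSD and is (C_{j(i)} ∪ C_{k(i)})-local, i.e. acts on at most 2q qubits); (ii) ‖H'_i‖ ≤ 1 for every i; and (iii) (1/m) · Σ_{i ∈ Fin m} H'_i = 2^{−(q+3)} · H. In particular, writing H' = (1/m) Σ_i H'_i, if the smallest eigenvalue of H is at most a then the smallest eigenvalue of H' is at most a/2^{q+3}, and if it is at least b then that of H' is at least b/2^{q+3}. -/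

import Mathlib

/-!
A `C`-local PSD term `H = h ⊗ I` has `‖H‖ ≤ ‖h‖ ≤ tr h`, while `tr H = 2^(n - |C|) tr h`, so
`∑ᵢ Hᵢ ≼ I` forces `∑ᵢ tr hᵢ ≤ 2^q`. Scaling by `α = m / 2^(q+3)` and cutting `α Hᵢ` into
`⌊2 α tr hᵢ⌋ + 1` equal pieces gives pieces of norm `< 1/2`, and at most `m + m/4 ≤ 2m` of them;
placed into `2m` slots (padded with zeros) and grouped in pairs, they give the `m` terms `H'ᵢ`.
-/

open Matrix
open scoped Matrix.Norms.L2Operator ComplexOrder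

/-- `H` is `S`-local with local part `h`: under the canonical bijection
`(Fin n → Fin 2) ≃ (S → Fin 2) × (Sᶜ → Fin 2)`, `H` corresponds to `h ⊗ₖ I`.
Entrywise: `H x y = h (x|_S) (y|_S)` if `x` and `y` agree outside `S`, and `0` otherwise. -/
def Matrix.IsLocalOn {n : ℕ} (S : Finset (Fin n))
    (h : Matrix ({i // i ∈ S} → Fin 2) ({i // i ∈ S} → Fin 2) ℂ)
    (H : Matrix (Fin n → Fin 2) (Fin n → Fin 2) ℂ) : Prop :=
  ∀ x y : Fin n → Fin 2,
    H x y = h (fun i => x i.1) (fun i => y i.1) *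
      (if ∀ i ∉ S, x i = y i then 1 else 0)

open scoped Kronecker

open scoped MatrixOrder in
theorem Matrix.PosSemidef.norm_le_re_trace {ι : Type*} [Fintype ι] [DecidableEq ι]
    {A : Matrix ι ι ℂ} (hA : A.PosSemidef) : ‖A‖ ≤ A.trace.re := by
  rcases subsingleton_or_nontrivial (Matrix ι ι ℂ) with _ | _
  · simp [Subsingleton.elim A 0]
  obtain ⟨i, hi⟩ : ‖A‖ ∈ Set.range hA.isHermitian.eigenvalues :=
    hA.isHermitian.spectrum_real_eq_range_eigenvalues ▸
      CStarAlgebra.norm_mem_spectrum_of_nonneg hA.nonneg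
  rw [← hi, hA.isHermitian.trace_eq_sum_eigenvalues, Complex.re_sum]
  simpa using Finset.single_le_sum (fun j _ => hA.eigenvalues_nonneg j) (Finset.mem_univ i)

namespace Matrix.IsLocalOn

variable {n : ℕ} {S : Finset (Fin n)}
  {h : Matrix ({i // i ∈ S} → Fin 2) ({i // i ∈ S} → Fin 2) ℂ}
  {H : Matrix (Fin n → Fin 2) (Fin n → Fin 2) ℂ}

abbrev splitEquiv (S : Finset (Fin n)) :
    (Fin n → Fin 2) ≃ ({i // i ∈ S} → Fin 2) × ({i // i ∉ S} → Fin 2) :=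
  Equiv.piEquivPiSubtypeProd (· ∈ S) fun _ => Fin 2

theorem eq_submatrix_kronecker (hloc : IsLocalOn S h H) :
    H = (h ⊗ₖ (1 : Matrix ({i // i ∉ S} → Fin 2) ({i // i ∉ S} → Fin 2) ℂ)).submatrix
      (splitEquiv S) (splitEquiv S) := by
  ext x y
  rw [hloc x y, submatrix_apply, kronecker_apply, one_apply]
  congr 2
  simp [funext_iff]

theorem posSemidef (hloc : IsLocalOn S h H) (hh : h.PosSemidef) : H.PosSemidef :=
  hloc.eq_submatrix_kronecker ▸ (hh.kronecker PosSemidef.one).submatrix _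

theorem trace_eq (hloc : IsLocalOn S h H) : H.trace = 2 ^ (n - S.card) * h.trace := by
  rw [hloc.eq_submatrix_kronecker]
  change ∑ x, (h ⊗ₖ 1) (splitEquiv S x) (splitEquiv S x) = _
  rw [Equiv.sum_comp (splitEquiv S) fun p => (h ⊗ₖ 1) p p]
  change trace (h ⊗ₖ 1) = _
  rw [trace_kronecker, trace_one, mul_comm]
  simp [Fintype.card_subtype_compl]

open scoped MatrixOrder in
theorem norm_le (hloc : IsLocalOn S h H) (hh : h.PosSemidef) : ‖H‖ ≤ ‖h‖ := by
  have hle : h ≤ algebraMap ℝ _ ‖h‖ := hh.isHermitian.isSelfAdjoint.le_algebraMap_norm_self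
  rw [CStarAlgebra.norm_le_iff_le_algebraMap _ (norm_nonneg h) (hloc.posSemidef hh).nonneg]
  rw [Algebra.algebraMap_eq_smul_one] at hle ⊢
  have key : (‖h‖ • 1 - h) ⊗ₖ (1 : Matrix ({i // i ∉ S} → Fin 2) ({i // i ∉ S} → Fin 2) ℂ) =
      ‖h‖ • 1 - h ⊗ₖ 1 := by
    rw [eq_sub_iff_add_eq, ← add_kronecker, sub_add_cancel, smul_kronecker, one_kronecker_one]
  have hshift : ‖h‖ • 1 - H = ((‖h‖ • 1 - h) ⊗ₖ 1).submatrix (splitEquiv S) (splitEquiv S) := by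
    rw [key, hloc.eq_submatrix_kronecker, ← submatrix_one_equiv (splitEquiv S)]
    rfl
  exact le_iff.mpr (hshift ▸ ((le_iff.mp hle).kronecker PosSemidef.one).submatrix _)

theorem norm_le_re_trace (hloc : IsLocalOn S h H) (hh : h.PosSemidef) : ‖H‖ ≤ h.trace.re :=
  (hloc.norm_le hh).trans hh.norm_le_re_trace

theorem two_pow_mul_re_trace_le (hloc : IsLocalOn S h H) (hh : h.PosSemidef) {q : ℕ}
    (hS : S.card ≤ q) : 2 ^ n * h.trace.re ≤ 2 ^ q * H.trace.re := by
  have hH : H.trace.re = 2 ^ (n - S.card) * h.trace.re := by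
    rw [hloc.trace_eq, ← Complex.ofReal_ofNat, ← Complex.ofReal_pow, Complex.re_ofReal_mul]
  calc 2 ^ n * h.trace.re = 2 ^ S.card * H.trace.re := by
        rw [hH, ← mul_assoc, ← pow_add, Nat.add_sub_cancel' (card_finset_fin_le S)]
    _ ≤ 2 ^ q * H.trace.re := by
        gcongr
        · exact Complex.nonneg_iff.mp (hloc.posSemidef hh).trace_nonneg |>.1
        · norm_num

end Matrix.IsLocalOn

theorem sum_re_trace_le_two_pow_of_sum_le_one {n q m : ℕ} {C : Fin m → Finset (Fin n)}
    (hCcard : ∀ i, (C i).card ≤ q)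
    {h : ∀ i : Fin m, Matrix ({j // j ∈ C i} → Fin 2) ({j // j ∈ C i} → Fin 2) ℂ}
    (hpsd : ∀ i, (h i).PosSemidef) {H : Fin m → Matrix (Fin n → Fin 2) (Fin n → Fin 2) ℂ}
    (hlocal : ∀ i, Matrix.IsLocalOn (C i) (h i) (H i))
    (hle : ((1 : Matrix (Fin n → Fin 2) (Fin n → Fin 2) ℂ) - ∑ i, H i).PosSemidef) :
    ∑ i, (h i).trace.re ≤ 2 ^ q := by
  have hsum : ∑ i, (H i).trace.re ≤ 2 ^ n := by
    have := (Complex.nonneg_iff.mp hle.trace_nonneg).1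
    simp only [trace_sub, trace_one, trace_sum, Complex.sub_re, Complex.re_sum,
      Fintype.card_pi, Fintype.card_fin, Finset.prod_const, Finset.card_univ] at this
    exact_mod_cast sub_nonneg.mp this
  have : 2 ^ n * ∑ i, (h i).trace.re ≤ 2 ^ n * 2 ^ q := calc
    2 ^ n * ∑ i, (h i).trace.re ≤ 2 ^ q * ∑ i, (H i).trace.re := by
        simp only [Finset.mul_sum]
        exact Finset.sum_le_sum fun i _ => (hlocal i).two_pow_mul_re_trace_le (hpsd i) (hCcard i)
    _ ≤ 2 ^ q * 2 ^ n := by gcongr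
    _ = 2 ^ n * 2 ^ q := mul_comm _ _
  exact le_of_mul_le_mul_left this (by positivity)

theorem exists_split_into_slots {E : Type*} [AddCommMonoid E] [Module ℝ E] {m : ℕ}
    (v : Fin m → E) (α : ℝ) {N : Fin m → ℕ} (hN_pos : ∀ l, 0 < N l) (hN : ∑ l, N l ≤ m * 2) :
    ∃ (j : Fin m × Fin 2 → Fin m) (c : Fin m × Fin 2 → ℝ),
      (∀ s, c s = 0 ∨ c s = α / N (j s)) ∧ ∑ s, c s • v (j s) = α • ∑ l, v l := by
  classical
  -- the `N l` chunks `(α / N l) • v l` of each `v l` are placed into distinct slots,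
  -- and the remaining slots carry the coefficient `0`
  obtain ⟨e⟩ := Function.Embedding.nonempty_of_card_le (α := Σ l, Fin (N l))
    (β := Fin m × Fin 2) (by simpa using hN)
  set w : Fin m × Fin 2 → Fin m × ℝ :=
    Function.extend e (fun p => (p.1, α / N p.1)) (fun s => (s.1, 0))
  have hw_chunk (p : Σ l, Fin (N l)) : w (e p) = (p.1, α / N p.1) := e.injective.extend_apply _ _ _
  have hw_pad (s) (hs : s ∉ Set.range e) : w s = (s.1, 0) := Function.extend_apply' _ _ _ hs
  refine ⟨fun s => (w s).1, fun s => (w s).2, fun s => ?_, ?_⟩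
  · by_cases hs : s ∈ Set.range e
    · obtain ⟨p, rfl⟩ := hs
      simp [hw_chunk]
    · simp [hw_pad s hs]
  calc ∑ s, (w s).2 • v (w s).1 = ∑ p : Σ l, Fin (N l), (α / N p.1) • v p.1 :=
        (Fintype.sum_of_injective e e.injective _ _ (fun s hs => by simp [hw_pad s hs])
          (fun p => by simp [hw_chunk])).symm
    _ = ∑ l, α • v l := by
        rw [Fintype.sum_sigma]
        refine Finset.sum_congr rfl fun l _ => ?_
        have : (N l : ℝ) ≠ 0 := by exact_mod_cast (hN_pos l).ne'
        simp [← Nat.cast_smul_eq_nsmul ℝ, smul_smul, mul_div_cancel₀ _ this]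
    _ = α • ∑ l, v l := Finset.smul_sum.symm

theorem exists_smul_sum_eq_average_of_pairs {E : Type*} [AddCommMonoid E] [Module ℝ E] {m : ℕ}
    (v : Fin m → E) {g : Fin m → ℝ} (hg : ∀ l, 0 ≤ g l) {β : ℝ} (hβ : 0 ≤ β)
    (hβg : 2 * β * ∑ l, g l ≤ 1) :
    ∃ (j : Fin m × Fin 2 → Fin m) (c : Fin m × Fin 2 → ℝ), (∀ s, 0 ≤ c s) ∧
      (∀ s, c s * g (j s) ≤ 1 / 2) ∧ (1 / (m : ℝ)) • ∑ s, c s • v (j s) = β • ∑ l, v l := by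
  set α : ℝ := m * β
  have hα : 0 ≤ α := mul_nonneg m.cast_nonneg hβ
  have hαg (l : Fin m) : 0 ≤ 2 * α * g l := mul_nonneg (by positivity) (hg l)
  set N : Fin m → ℕ := fun l => ⌊2 * α * g l⌋₊ + 1
  have hN_pos (l : Fin m) : (0 : ℝ) < N l := by positivity
  have hN_gt (l : Fin m) : 2 * α * g l < N l := by exact_mod_cast Nat.lt_floor_add_one _
  have hN : ∑ l, N l ≤ m * 2 := by
    have : ∑ l, (N l : ℝ) ≤ m * 2 := calc
      ∑ l, (N l : ℝ) ≤ ∑ l, (2 * α * g l + 1) := Finset.sum_le_sum fun l _ => by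
          simpa [N] using Nat.floor_le (hαg l)
      _ = m * (2 * β * ∑ l, g l) + m := by
          simp only [Finset.sum_add_distrib, ← Finset.mul_sum, Finset.sum_const, Finset.card_univ,
            Fintype.card_fin, nsmul_eq_mul, mul_one, α]
          ring
      _ ≤ m * 2 := by nlinarith [(m.cast_nonneg : (0 : ℝ) ≤ m)]
    exact_mod_cast this
  obtain ⟨j, c, hc, hsum⟩ := exists_split_into_slots v α (fun l => Nat.succ_pos _) hN
  refine ⟨j, c, fun s => ?_, fun s => ?_, ?_⟩
  · rcases hc s with hcs | hcs <;> rw [hcs]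
    exact div_nonneg hα (hN_pos _).le
  · rcases hc s with hcs | hcs <;> rw [hcs]
    · norm_num
    · rw [div_mul_eq_mul_div, div_le_iff₀ (hN_pos _)]
      linarith [hN_gt (j s)]
  rw [hsum, smul_smul]
  rcases eq_or_ne m 0 with rfl | hm
  · simp
  · rw [one_div, inv_mul_cancel_left₀ (Nat.cast_ne_zero.mpr hm)]

theorem hamiltonian_local_smoothing_general
    (n q m : ℕ)
    (C : Fin m → Finset (Fin n))
    (hCcard : ∀ i, (C i).card ≤ q)
    (h : ∀ i : Fin m, Matrix ({j // j ∈ C i} → Fin 2) ({j // j ∈ C i} → Fin 2) ℂ)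
    (hpsd : ∀ i, (h i).PosSemidef)
    (H : Fin m → Matrix (Fin n → Fin 2) (Fin n → Fin 2) ℂ)
    (hlocal : ∀ i, Matrix.IsLocalOn (C i) (h i) (H i))
    (hle : ((1 : Matrix (Fin n → Fin 2) (Fin n → Fin 2) ℂ) - ∑ i, H i).PosSemidef) :
    ∃ (H' : Fin m → Matrix (Fin n → Fin 2) (Fin n → Fin 2) ℂ)
      (j k : Fin m → Fin m) (c d : Fin m → ℝ),
      (∀ i, 0 ≤ c i) ∧ (∀ i, 0 ≤ d i) ∧
      (∀ i, H' i = c i • H (j i) + d i • H (k i)) ∧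
      (∀ i, ‖H' i‖ ≤ 1) ∧
      ((1 / (m : ℝ)) • ∑ i, H' i = ((2 : ℝ) ^ (q + 3))⁻¹ • ∑ i, H i) := by
  set g : Fin m → ℝ := fun i => (h i).trace.re
  have hg : ∀ i, 0 ≤ g i := fun i => (Complex.nonneg_iff.mp (hpsd i).trace_nonneg).1
  have hgsum : 2 * ((2 : ℝ) ^ (q + 3))⁻¹ * ∑ i, g i ≤ 1 := calc
    2 * ((2 : ℝ) ^ (q + 3))⁻¹ * ∑ i, g i ≤ 2 * ((2 : ℝ) ^ (q + 3))⁻¹ * 2 ^ q := by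
        gcongr
        exact sum_re_trace_le_two_pow_of_sum_le_one hCcard hpsd hlocal hle
    _ ≤ 1 := by
        rw [pow_add]
        field_simp
        norm_num
  obtain ⟨jk, c, hc, hcg, hsum⟩ :=
    exists_smul_sum_eq_average_of_pairs H hg (by positivity) hgsum
  have hnorm (s : Fin m × Fin 2) : ‖c s • H (jk s)‖ ≤ 1 / 2 := by
    rw [norm_smul, Real.norm_of_nonneg (hc s)]
    exact (mul_le_mul_of_nonneg_left ((hlocal _).norm_le_re_trace (hpsd _)) (hc s)).trans (hcg s)
  refine ⟨fun i => c (i, 0) • H (jk (i, 0)) + c (i, 1) • H (jk (i, 1)), fun i => jk (i, 0),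
    fun i => jk (i, 1), fun i => c (i, 0), fun i => c (i, 1), fun i => hc _, fun i => hc _,
    fun i => rfl, fun i => ?_, ?_⟩
  · exact (norm_add_le _ _).trans (by linarith [hnorm (i, 0), hnorm (i, 1)])
  · rw [← hsum, Fintype.sum_prod_type]
    simp [Fin.sum_univ_two]

/-- **Hamiltonian local smoothing lemma.**
If `H = ∑ᵢ H_i ≼ I` is a sum of `q`-local PSD terms (each `H_i` being `C_i`-local
with PSD local part `h_i`, `|C_i| ≤ q`), then there are terms `H'_i`, each a
nonnegative combination `c_i • H_{j(i)} + d_i • H_{k(i)}` of two of the original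
terms (hence PSD and `2q`-local), with `‖H'_i‖ ≤ 1` and
`(1/m) ∑ᵢ H'_i = 2^{-(q+3)} • H`. -/
theorem hamiltonian_local_smoothing
    (n q m : ℕ) (hqn : q ≤ n) (hm : 1 ≤ m)
    (C : Fin m → Finset (Fin n))
    (hCcard : ∀ i, (C i).card ≤ q)
    (h : ∀ i : Fin m, Matrix ({j // j ∈ C i} → Fin 2) ({j // j ∈ C i} → Fin 2) ℂ)
    (hpsd : ∀ i, (h i).PosSemidef)
    (H : Fin m → Matrix (Fin n → Fin 2) (Fin n → Fin 2) ℂ)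
    (hlocal : ∀ i, Matrix.IsLocalOn (C i) (h i) (H i))
    (hle : ((1 : Matrix (Fin n → Fin 2) (Fin n → Fin 2) ℂ) - ∑ i, H i).PosSemidef) :
    ∃ (H' : Fin m → Matrix (Fin n → Fin 2) (Fin n → Fin 2) ℂ)
      (j k : Fin m → Fin m) (c d : Fin m → ℝ),
      (∀ i, 0 ≤ c i) ∧ (∀ i, 0 ≤ d i) ∧
      (∀ i, H' i = c i • H (j i) + d i • H (k i)) ∧
      (∀ i, ‖H' i‖ ≤ 1) ∧
      ((1 / (m : ℝ)) • ∑ i, H' i = ((2 : ℝ) ^ (q + 3))⁻¹ • ∑ i, H i) :=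
  hamiltonian_local_smoothing_general n q m C hCcard h hpsd H hlocal hle
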